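/- Let A, C ∈ ℝ^{n×n}. If there exists a positive definite symmetric matrix P with P A + A^T P + C^T P C < 0 (negative definite), then for every positive definite Λ there exists a positive definite symmetric solution P' to the Lyapunov equation P' A + A^T P' + C^T P' C + Λ = 0. -/

import Mathlib

open Matrix

namespace LyapAux

variable {n : ℕ}

/-- Quadratic form of a real matrix. -/
def q (M : Matrix (Fin n) (Fin n) ℝ) (v : Fin n → ℝ) : ℝ := v ⬝ᵥ M *ᵥ v

lemma star_eq (v : Fin n → ℝ) : star v = v := by funext i; simp

lemma q_add (M N : Matrix (Fin n) (Fin n) ℝ) (v : Fin n → ℝ) :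
    q (M + N) v = q M v + q N v := by
  simp [q, add_mulVec, dotProduct_add]

lemma q_smul (s : ℝ) (M : Matrix (Fin n) (Fin n) ℝ) (v : Fin n → ℝ) :
    q (s • M) v = s * q M v := by
  simp [q, smul_mulVec, dotProduct_smul, smul_eq_mul]

lemma q_neg (M : Matrix (Fin n) (Fin n) ℝ) (v : Fin n → ℝ) : q (-M) v = - q M v := by
  simp [q, neg_mulVec, dotProduct_neg]

lemma q_smul_vec (M : Matrix (Fin n) (Fin n) ℝ) (a : ℝ) (v : Fin n → ℝ) :
    q M (a • v) = a ^ 2 * q M v := by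
  simp [q, mulVec_smul, smul_dotProduct, dotProduct_smul, smul_eq_mul]; ring

lemma isHermitian_iff (M : Matrix (Fin n) (Fin n) ℝ) : M.IsHermitian ↔ Mᵀ = M := by
  rw [Matrix.IsHermitian, conjTranspose_eq_transpose_of_trivial]

lemma posDef_q {M : Matrix (Fin n) (Fin n) ℝ} (h : M.PosDef) {v : Fin n → ℝ} (hv : v ≠ 0) :
    0 < q M v := by
  have := h.dotProduct_mulVec_pos hv; rwa [star_eq] at this

lemma posSemidef_q {M : Matrix (Fin n) (Fin n) ℝ} (h : M.PosSemidef) (v : Fin n → ℝ) :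
    0 ≤ q M v := by
  have := h.dotProduct_mulVec_nonneg v; rwa [star_eq] at this

/-- The generalized Lyapunov operator. -/
def Lop (A C M : Matrix (Fin n) (Fin n) ℝ) : Matrix (Fin n) (Fin n) ℝ :=
  M * A + Aᵀ * M + Cᵀ * M * C

/-- Boundary lemma: if `M` is symmetric PSD with a nonzero kernel vector and
    `-(Lop A C M)` is positive definite, we get a contradiction. -/
lemma boundary (A C : Matrix (Fin n) (Fin n) ℝ) {M : Matrix (Fin n) (Fin n) ℝ}
    (hsym : Mᵀ = M) (hM : M.PosSemidef) {v : Fin n → ℝ} (hv : v ≠ 0)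
    (hMv : M *ᵥ v = 0) (hR : (-(Lop A C M)).PosDef) : False := by
  have h1 : q (M * A) v = 0 := by
    rw [q, ← mulVec_mulVec, dotProduct_mulVec, ← mulVec_transpose, hsym, hMv, zero_dotProduct]
  have h2 : q (Aᵀ * M) v = 0 := by
    rw [q, ← mulVec_mulVec, hMv, mulVec_zero, dotProduct_zero]
  have h3 : 0 ≤ q (Cᵀ * M * C) v := by
    have : q (Cᵀ * M * C) v = (C *ᵥ v) ⬝ᵥ M *ᵥ (C *ᵥ v) := by
      rw [q, ← mulVec_mulVec, ← mulVec_mulVec, dotProduct_mulVec, vecMul_transpose,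
        dotProduct_mulVec]
    rw [this]
    have := posSemidef_q hM (C *ᵥ v)
    rwa [q] at this
  have hq : 0 ≤ q (Lop A C M) v := by
    have : q (Lop A C M) v = q (M * A) v + q (Aᵀ * M) v + q (Cᵀ * M * C) v := by
      simp [q, Lop, add_mulVec, dotProduct_add]
    rw [this, h1, h2]; simpa using h3
  have := posDef_q hR hv
  rw [q_neg] at this
  linarith

lemma q_bound (M : Matrix (Fin n) (Fin n) ℝ) {v : Fin n → ℝ} (hv : ‖v‖ ≤ 1) :
    |q M v| ≤ ∑ i, ∑ j, |M i j| := by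
  have hvi : ∀ i, |v i| ≤ 1 := by
    intro i
    calc |v i| = ‖v i‖ := (Real.norm_eq_abs _).symm
    _ ≤ ‖v‖ := norm_le_pi_norm v i
    _ ≤ 1 := hv
  have : q M v = ∑ i, v i * ∑ j, M i j * v j := by simp [q, dotProduct, mulVec]
  rw [this]
  calc |∑ i, v i * ∑ j, M i j * v j| ≤ ∑ i, |v i * ∑ j, M i j * v j| :=
        Finset.abs_sum_le_sum_abs _ _
    _ ≤ ∑ i, ∑ j, |M i j| := by
        apply Finset.sum_le_sum
        intro i _
        rw [abs_mul]
        calc |v i| * |∑ j, M i j * v j| ≤ 1 * |∑ j, M i j * v j| :=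
              mul_le_mul_of_nonneg_right (hvi i) (abs_nonneg _)
          _ = |∑ j, M i j * v j| := one_mul _
          _ ≤ ∑ j, |M i j * v j| := Finset.abs_sum_le_sum_abs _ _
          _ ≤ ∑ j, |M i j| := by
              apply Finset.sum_le_sum
              intro j _
              rw [abs_mul]
              calc |M i j| * |v j| ≤ |M i j| * 1 :=
                    mul_le_mul_of_nonneg_left (hvi j) (abs_nonneg _)
                _ = |M i j| := mul_one _

lemma posDef_of_sphere {M : Matrix (Fin n) (Fin n) ℝ} (hsym : Mᵀ = M) {c : ℝ} (hc : 0 < c)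
    (h : ∀ v : Fin n → ℝ, ‖v‖ = 1 → c ≤ q M v) : M.PosDef := by
  refine Matrix.PosDef.of_dotProduct_mulVec_pos ((isHermitian_iff M).mpr hsym) (fun ⦃x⦄ hx => ?_)
  rw [star_eq]
  have hnx : ‖x‖ ≠ 0 := norm_ne_zero_iff.mpr hx
  set u : Fin n → ℝ := ‖x‖⁻¹ • x with hu
  have hun : ‖u‖ = 1 := by
    rw [hu, norm_smul, norm_inv, norm_norm, inv_mul_cancel₀ hnx]
  have hxu : x = ‖x‖ • u := by
    rw [hu, smul_smul, mul_inv_cancel₀ hnx, one_smul]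
  have : (0:ℝ) < q M x := by
    rw [hxu, q_smul_vec]
    have := lt_of_lt_of_le hc (h u hun)
    positivity
  exact this

lemma exists_sphere_min (hn : 0 < n) (M : Matrix (Fin n) (Fin n) ℝ) :
    ∃ v₀ : Fin n → ℝ, ‖v₀‖ = 1 ∧ ∀ v : Fin n → ℝ, ‖v‖ = 1 → q M v₀ ≤ q M v := by
  have hcompact : IsCompact (Metric.sphere (0 : Fin n → ℝ) 1) := isCompact_sphere 0 1
  have hne : (Metric.sphere (0 : Fin n → ℝ) 1).Nonempty := by
    refine ⟨Pi.single ⟨0, hn⟩ 1, ?_⟩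
    simp [mem_sphere_zero_iff_norm, Pi.norm_single]
  have hcont : ContinuousOn (fun v => q M v) (Metric.sphere (0:Fin n → ℝ) 1) := by
    apply Continuous.continuousOn
    have : (fun v : Fin n → ℝ => q M v) = fun v => ∑ i, v i * ∑ j, M i j * v j := by
      funext v; simp [q, dotProduct, mulVec]
    rw [this]; fun_prop
  obtain ⟨v₀, hv₀mem, hv₀min⟩ := hcompact.exists_isMinOn hne hcont
  refine ⟨v₀, by simpa [mem_sphere_zero_iff_norm] using hv₀mem, fun v hv => ?_⟩
  exact hv₀min (by simpa [mem_sphere_zero_iff_norm] using hv)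

/-- The key path lemma: if along the segment `s ↦ P + s • X`, `s ∈ [0, s₁]`, the value of
    (minus) the Lyapunov operator is always positive definite, and the left endpoint is
    positive definite, then so is the right endpoint. -/
lemma pd_path (hn : 0 < n) (A C P X : Matrix (Fin n) (Fin n) ℝ)
    (hPsym : Pᵀ = P) (hXsym : Xᵀ = X) (hP : P.PosDef) {s₁ : ℝ} (hs₁ : 0 ≤ s₁)
    (hR : ∀ s ∈ Set.Icc (0:ℝ) s₁, (-(Lop A C (P + s • X))).PosDef) :
    (P + s₁ • X).PosDef := by
  set γ : ℝ → Matrix (Fin n) (Fin n) ℝ := fun s => P + s • X with hγ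
  have hγsym : ∀ s, (γ s)ᵀ = γ s := by
    intro s
    simp [hγ, transpose_add, transpose_smul, hPsym, hXsym]
  have hγq : ∀ s v, q (γ s) v = q P v + s * q X v := by
    intro s v; rw [hγ]; simp only []
    rw [q_add, q_smul]
  set S : Set ℝ := {s | s ∈ Set.Icc (0:ℝ) s₁ ∧ (γ s).PosSemidef} with hS
  have h0S : (0:ℝ) ∈ S := by
    refine ⟨⟨le_refl 0, hs₁⟩, ?_⟩
    have : γ 0 = P := by simp [hγ]
    rw [this]; exact hP.posSemidef
  have hSne : S.Nonempty := ⟨0, h0S⟩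
  have hSbdd : BddAbove S := ⟨s₁, fun s hs => hs.1.2⟩
  set t := sSup S with ht
  have htmem : t ∈ Set.Icc (0:ℝ) s₁ :=
    ⟨le_csSup hSbdd h0S, csSup_le hSne (fun s hs => hs.1.2)⟩
  have htpsd : (γ t).PosSemidef := by
    refine Matrix.PosSemidef.of_dotProduct_mulVec_nonneg ((isHermitian_iff _).mpr (hγsym t)) (fun v => ?_)
    rw [star_eq]
    have hcl : t ∈ closure S := csSup_mem_closure hSne hSbdd
    have hsub : closure S ⊆ {s : ℝ | 0 ≤ q P v + s * q X v} := by
      apply closure_minimal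
      · intro s hs
        have := posSemidef_q hs.2 v
        rw [hγq] at this
        exact this
      · apply isClosed_le continuous_const
        fun_prop
    have := hsub hcl
    have h := hγq t v
    rw [q] at h
    rw [h]; exact this
  have htpd : (γ t).PosDef := by
    by_contra hnotpd
    have : ∃ v : Fin n → ℝ, v ≠ 0 ∧ q (γ t) v = 0 := by
      by_contra hno
      push_neg at hno
      exact hnotpd (Matrix.PosDef.of_dotProduct_mulVec_pos htpsd.1 fun ⦃v⦄ hv => by
        rw [star_eq]
        have := posSemidef_q htpsd v
        have hne := hno v hv
        rcases lt_or_eq_of_le this with h | h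
        · exact h
        · exact absurd h.symm hne)
    obtain ⟨v, hv, hqv⟩ := this
    have hker : (γ t) *ᵥ v = 0 :=
      (htpsd.dotProduct_mulVec_zero_iff v).mp (by rw [star_eq]; exact hqv)
    exact boundary A C (hγsym t) htpsd hv hker (hR t htmem)
  rcases eq_or_lt_of_le htmem.2 with heq | hlt
  · rwa [← heq]
  · exfalso
    obtain ⟨v₀, hv₀n, hv₀min⟩ := exists_sphere_min hn (γ t)
    set c := q (γ t) v₀ with hc
    have hcpos : 0 < c := posDef_q htpd (by intro h; rw [h] at hv₀n; simp at hv₀n)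
    set K := (∑ i, ∑ j, |X i j|) + 1 with hK
    have hKpos : 0 < K := by positivity
    set δ := min (c / (2 * K)) (s₁ - t) with hδ
    have hδpos : 0 < δ := lt_min (by positivity) (by linarith)
    have hδle : δ ≤ s₁ - t := min_le_right _ _
    have hδle2 : δ * K ≤ c / 2 := by
      have h1 : δ ≤ c / (2 * K) := min_le_left _ _
      calc δ * K ≤ (c / (2 * K)) * K := mul_le_mul_of_nonneg_right h1 hKpos.le
        _ = c / 2 := by field_simp
    have hmem' : t + δ ∈ Set.Icc (0:ℝ) s₁ := ⟨by linarith [htmem.1], by linarith⟩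
    have hpd' : (γ (t + δ)).PosDef := by
      apply posDef_of_sphere (hγsym _) (c := c / 2) (by positivity)
      intro v hvn
      have hb : |q X v| ≤ K - 1 := by
        have := q_bound X (le_of_eq hvn)
        simpa [hK] using this
      have h1 : q (γ (t + δ)) v = q (γ t) v + δ * q X v := by
        rw [hγq, hγq]; ring
      have h2 : c ≤ q (γ t) v := hv₀min v hvn
      have h3 : -(δ * K) ≤ δ * q X v := by
        have : -(K) ≤ q X v := by
          have := abs_le.mp hb
          linarith [this.1]
        calc -(δ * K) = δ * (-K) := by ring
          _ ≤ δ * q X v := mul_le_mul_of_nonneg_left this hδpos.le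
      rw [h1]
      have hfin : -(δ * K) ≤ δ * q X v := h3
      nlinarith [h2, hfin, hδle2]
    have : t + δ ∈ S := ⟨hmem', hpd'.posSemidef⟩
    have := le_csSup hSbdd this
    linarith

/-- The Lyapunov operator as a linear map. -/
def LHom (A C : Matrix (Fin n) (Fin n) ℝ) :
    Matrix (Fin n) (Fin n) ℝ →ₗ[ℝ] Matrix (Fin n) (Fin n) ℝ where
  toFun M := Lop A C M
  map_add' M N := by
    simp only [Lop, add_mul, mul_add]
    abel
  map_smul' s M := by
    simp only [Lop, RingHom.id_apply, smul_add, Matrix.smul_mul, Matrix.mul_smul]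

lemma Lop_add (A C M N : Matrix (Fin n) (Fin n) ℝ) :
    Lop A C (M + N) = Lop A C M + Lop A C N := (LHom A C).map_add M N

lemma Lop_smul (A C : Matrix (Fin n) (Fin n) ℝ) (s : ℝ) (M : Matrix (Fin n) (Fin n) ℝ) :
    Lop A C (s • M) = s • Lop A C M := (LHom A C).map_smul s M

lemma Lop_sub (A C M N : Matrix (Fin n) (Fin n) ℝ) :
    Lop A C (M - N) = Lop A C M - Lop A C N := (LHom A C).map_sub M N

/-- The subspace of symmetric matrices. -/
def symSub (n : ℕ) : Submodule ℝ (Matrix (Fin n) (Fin n) ℝ) where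
  carrier := {X | Xᵀ = X}
  add_mem' := by
    intro a b ha hb
    simp only [Set.mem_setOf_eq] at *
    rw [transpose_add, ha, hb]
  zero_mem' := by simp
  smul_mem' := by
    intro c x hx
    simp only [Set.mem_setOf_eq] at *
    rw [transpose_smul, hx]

lemma lop_mem_symSub (A C : Matrix (Fin n) (Fin n) ℝ) :
    ∀ X ∈ symSub n, Lop A C X ∈ symSub n := by
  intro X hX
  have hX' : Xᵀ = X := hX
  show (Lop A C X)ᵀ = Lop A C X
  simp only [Lop, transpose_add, transpose_mul, transpose_transpose, hX', Matrix.mul_assoc]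
  abel

/-- The Lyapunov operator restricted to symmetric matrices. -/
noncomputable def LSym (A C : Matrix (Fin n) (Fin n) ℝ) : symSub n →ₗ[ℝ] symSub n :=
  (LHom A C).restrict (lop_mem_symSub A C)

/-- Polarization: a symmetric matrix with vanishing quadratic form is zero. -/
lemma eq_zero_of_q_zero {X : Matrix (Fin n) (Fin n) ℝ} (hsym : Xᵀ = X)
    (h : ∀ v, q X v = 0) : X = 0 := by
  have key : ∀ u w : Fin n → ℝ, u ⬝ᵥ X *ᵥ w = 0 := by
    intro u w
    have hq : q X (u + w) = q X u + (u ⬝ᵥ X *ᵥ w) + (w ⬝ᵥ X *ᵥ u) + q X w := by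
      simp [q, mulVec_add, dotProduct_add, add_dotProduct]
      ring
    have hcomm : w ⬝ᵥ X *ᵥ u = u ⬝ᵥ X *ᵥ w := by
      rw [dotProduct_mulVec, ← mulVec_transpose, hsym, dotProduct_comm]
    rw [h (u + w), h u, h w, hcomm] at hq
    linarith
  ext i j
  have := key (Pi.single i 1) (Pi.single j 1)
  simpa [dotProduct, mulVec, Pi.single_apply, Finset.sum_ite_eq, mul_ite] using this

/-- No symmetric kernel direction with a negative quadratic value can exist. -/
lemma no_kernel_dir (hn : 0 < n) (A C P : Matrix (Fin n) (Fin n) ℝ)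
    (hP : P.PosDef) (hPsym : Pᵀ = P) (hstab : (-(Lop A C P)).PosDef)
    {Y : Matrix (Fin n) (Fin n) ℝ} (hYsym : Yᵀ = Y) (hLY : Lop A C Y = 0)
    {v : Fin n → ℝ} (hqv : q Y v < 0) : False := by
  have hv : v ≠ 0 := by
    intro h
    rw [h] at hqv
    simp [q] at hqv
  have hPv : 0 < q P v := posDef_q hP hv
  set a := -q Y v with ha
  have hapos : 0 < a := by rw [ha]; linarith
  set s₁ := q P v / a + 1 with hs₁def
  have hs₁pos : 0 < s₁ := by positivity
  have hR : ∀ s ∈ Set.Icc (0:ℝ) s₁, (-(Lop A C (P + s • Y))).PosDef := by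
    intro s _
    have : Lop A C (P + s • Y) = Lop A C P := by
      rw [Lop_add, Lop_smul, hLY, smul_zero, add_zero]
    rw [this]
    exact hstab
  have hpd := pd_path hn A C P Y hPsym hYsym hP hs₁pos.le hR
  have hqpos : 0 < q (P + s₁ • Y) v := posDef_q hpd hv
  rw [q_add, q_smul] at hqpos
  have hkey : s₁ * a = q P v + a := by
    rw [hs₁def]; field_simp
  have hqYv : q Y v = -a := by rw [ha]; ring
  rw [hqYv] at hqpos
  nlinarith [hkey, hqpos]

end LyapAux

open LyapAux in
theorem lyapunov_solvable (n : ℕ) (A C : Matrix (Fin n) (Fin n) ℝ)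
    (P : Matrix (Fin n) (Fin n) ℝ) (hP : P.PosDef)
    (hstab : (-(P * A + Aᵀ * P + Cᵀ * P * C)).PosDef) :
    ∀ Λ : Matrix (Fin n) (Fin n) ℝ, Λ.PosDef →
      ∃ P' : Matrix (Fin n) (Fin n) ℝ, P'.PosDef ∧
        P' * A + Aᵀ * P' + Cᵀ * P' * C + Λ = 0 := by
  intro Λ hΛ
  rcases Nat.eq_zero_or_pos n with h0 | hn
  · subst h0
    refine ⟨0, ⟨(isHermitian_iff _).mpr (by simp), fun x hx => absurd (Subsingleton.elim x 0) hx⟩,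
      Subsingleton.elim _ _⟩
  · have hstab' : (-(Lop A C P)).PosDef := hstab
    have hPsym : Pᵀ = P := (isHermitian_iff P).mp hP.1
    have hΛsym : Λᵀ = Λ := (isHermitian_iff Λ).mp hΛ.1
    -- injectivity of the restricted Lyapunov operator
    have hinj : Function.Injective (LSym A C (n := n)) := by
      rw [← LinearMap.ker_eq_bot]
      rw [LinearMap.ker_eq_bot']
      intro X hX0
      have hLX : Lop A C (X : Matrix (Fin n) (Fin n) ℝ) = 0 := by
        have := congrArg Subtype.val hX0
        exact this
      have hXsym : (X : Matrix (Fin n) (Fin n) ℝ)ᵀ = (X : Matrix (Fin n) (Fin n) ℝ) := X.2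
      apply Subtype.ext
      show (X : Matrix (Fin n) (Fin n) ℝ) = 0
      apply eq_zero_of_q_zero hXsym
      intro v
      by_contra hqv
      rcases lt_or_gt_of_ne hqv with hneg | hpos
      · exact no_kernel_dir hn A C P hP hPsym hstab' hXsym hLX hneg
      · have hYsym : (-(X : Matrix (Fin n) (Fin n) ℝ))ᵀ = -(X : Matrix (Fin n) (Fin n) ℝ) := by
          rw [transpose_neg, hXsym]
        have hLY : Lop A C (-(X : Matrix (Fin n) (Fin n) ℝ)) = 0 := by
          have : (-(X : Matrix (Fin n) (Fin n) ℝ)) = (-1 : ℝ) • (X : Matrix (Fin n) (Fin n) ℝ) := by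
            simp
          rw [this, Lop_smul, hLX, smul_zero]
        have hqneg : q (-(X : Matrix (Fin n) (Fin n) ℝ)) v < 0 := by
          rw [q_neg]; linarith
        exact no_kernel_dir hn A C P hP hPsym hstab' hYsym hLY hqneg
    have hsurj : Function.Surjective (LSym A C (n := n)) :=
      LinearMap.injective_iff_surjective.mp hinj
    have hmem : -Λ ∈ symSub n := by
      show (-Λ)ᵀ = -Λ
      rw [transpose_neg, hΛsym]
    obtain ⟨Y, hY⟩ := hsurj ⟨-Λ, hmem⟩
    have hYeq : Lop A C (Y : Matrix (Fin n) (Fin n) ℝ) = -Λ := congrArg Subtype.val hY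
    set P₁ := (Y : Matrix (Fin n) (Fin n) ℝ) with hP₁
    have hP₁sym : P₁ᵀ = P₁ := Y.2
    set X := P₁ - P with hX
    have hXsym : Xᵀ = X := by rw [hX, transpose_sub, hP₁sym, hPsym]
    have hR : ∀ s ∈ Set.Icc (0:ℝ) 1, (-(Lop A C (P + s • X))).PosDef := by
      intro s hs
      have he : -(Lop A C (P + s • X)) = (1 - s) • (-(Lop A C P)) + s • Λ := by
        rw [Lop_add, Lop_smul, hX, Lop_sub, hYeq]
        module
      rw [he]
      set Q := -(Lop A C P) with hQ
      have hQsym : Qᵀ = Q := (isHermitian_iff Q).mp hstab'.1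
      refine Matrix.PosDef.of_dotProduct_mulVec_pos ((isHermitian_iff _).mpr ?_) (fun ⦃v⦄ hv => ?_)
      · rw [transpose_add, transpose_smul, transpose_smul, hQsym, hΛsym]
      · rw [star_eq]
        have hval : q ((1 - s) • Q + s • Λ) v = (1 - s) * q Q v + s * q Λ v := by
          rw [q_add, q_smul, q_smul]
        show 0 < q ((1 - s) • Q + s • Λ) v
        rw [hval]
        have hQv : 0 < q Q v := posDef_q hstab' hv
        have hΛv : 0 < q Λ v := posDef_q hΛ hv
        rcases eq_or_lt_of_le hs.1 with h0s | h0s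
        · rw [← h0s]; simpa using hQv
        · have h1 : 0 ≤ (1 - s) * q Q v := mul_nonneg (by linarith [hs.2]) hQv.le
          have h2 : 0 < s * q Λ v := mul_pos h0s hΛv
          linarith
    have hpd := pd_path hn A C P X hPsym hXsym hP zero_le_one hR
    have hP₁eq : P + (1:ℝ) • X = P₁ := by rw [hX, one_smul]; abel
    rw [hP₁eq] at hpd
    refine ⟨P₁, hpd, ?_⟩
    have : P₁ * A + Aᵀ * P₁ + Cᵀ * P₁ * C = Lop A C P₁ := rfl
    rw [this, hYeq]
    abel
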